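/- Let D = S⁺ ∩ N be the cone of (n+1)×(n+1) doubly nonnegative matrices and let E be a symmetric index set containing the diagonal. Let Q⁰,…,Qᵐ be symmetric matrices supported on E and 𝒴 a set defined by linear conditions on entries in E only. Then inf{⟨Q⁰,Y⟩ : Y ∈ 𝒴, ⟨Q^k,Y⟩ ≤ 0 ∀k, Y ∈ D} equals inf{⟨Q⁰,Y⟩ : Y ∈ 𝒴, ⟨Q^k,Y⟩ ≤ 0 ∀k, ⟨C, Y⟩ ≥ 0 for all C ∈ D* ∩ H_E}, where D* = S⁺ + N and H_E is the set of symmetric matrices supported on E. -/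

import Mathlib

/-!
A doubly nonnegative `Y` satisfies every cut, because `⟨P, Y⟩ ≥ 0` for `P, Y ⪰ 0` (Schur product
theorem) and `⟨N, Y⟩ ≥ 0` for entrywise nonnegative `N, Y`. Conversely, the data only see the
entries of `Y` indexed by `E`, so it suffices to complete a matrix satisfying the cuts to a doubly
nonnegative one with the same `E`-entries, i.e. to show that its `E`-part lies in the projection
`K` of `D` onto the `E`-coordinates. Since `E` contains the diagonal and `2|Aᵢⱼ| ≤ Aᵢᵢ + Aⱼⱼ` for
`A ⪰ 0`, `K` is closed. If the `E`-part were outside `K`, a separating functional, symmetrised and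
supported on `E`, would be a symmetric element of `D*` violating a cut; but symmetric elements of
`D*` lie in `S⁺ + N` by the bipolar theorem, as `S⁺ + N` is closed for the same diagonal reason.
-/

open Matrix Set Bornology Metric
open scoped RealInnerProductSpace

theorem IsClosed.image_of_isBounded_inter_preimage {X Y : Type*} [PseudoMetricSpace X]
    [ProperSpace X] [MetricSpace Y] {f : X → Y} (hf : Continuous f) {S : Set X}
    (hS : IsClosed S) (hb : ∀ B, IsBounded B → IsBounded (S ∩ f ⁻¹' B)) :
    IsClosed (f '' S) := by
  refine isClosed_of_closure_subset fun y hy => ?_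
  have hK : IsCompact (S ∩ f ⁻¹' closedBall y 1) :=
    isCompact_of_isClosed_isBounded (hS.inter (isClosed_closedBall.preimage hf))
      (hb _ isBounded_closedBall)
  have hy' : y ∈ closure (f '' (S ∩ f ⁻¹' closedBall y 1)) := by
    refine closure_mono ?_ (isOpen_ball.inter_closure ⟨mem_ball_self one_pos, hy⟩)
    rintro _ ⟨hball, x, hx, rfl⟩
    exact ⟨x, ⟨hx, ball_subset_closedBall hball⟩, rfl⟩
  exact image_mono inter_subset_left ((hK.image hf).isClosed.closure_subset hy')

theorem EuclideanSpace.isBounded_setOf_forall_abs_apply_le {ι : Type*} [Fintype ι] (b : ℝ) :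
    IsBounded {x : EuclideanSpace ℝ ι | ∀ i, |x i| ≤ b} := by
  rw [isBounded_induced (f := WithLp.ofLp), ← forall_isBounded_image_eval_iff]
  intro i
  refine (isBounded_Icc (-b) b).subset ?_
  rintro _ ⟨_, ⟨x, hx, rfl⟩, rfl⟩
  exact abs_le.mp (hx i)

namespace EuclideanSpace

section mask

variable {ι : Type*} [DecidableEq ι] (s : Finset ι)

def mask : EuclideanSpace ℝ ι →ₗ[ℝ] EuclideanSpace ℝ ι where
  toFun x := WithLp.toLp 2 fun i => if i ∈ s then x i else 0
  map_add' x y := by ext i; by_cases h : i ∈ s <;> simp [h]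
  map_smul' c x := by ext i; by_cases h : i ∈ s <;> simp [h]

theorem mask_apply (x : EuclideanSpace ℝ ι) (i : ι) : mask s x i = if i ∈ s then x i else 0 := rfl

@[simp] theorem mask_mask (x : EuclideanSpace ℝ ι) : mask s (mask s x) = mask s x := by
  ext i; by_cases h : i ∈ s <;> simp [mask_apply, h]

theorem inner_mask_left [Fintype ι] (x y : EuclideanSpace ℝ ι) : ⟪mask s x, y⟫ = ⟪x, mask s y⟫ := by
  simp only [PiLp.inner_apply, mask_apply]
  refine Finset.sum_congr rfl fun i _ => ?_
  split_ifs <;> simp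

end mask

variable {F : Type*}

def toMatrix : EuclideanSpace ℝ (F × F) ≃ₗ[ℝ] Matrix F F ℝ :=
  (WithLp.linearEquiv 2 ℝ _).trans (LinearEquiv.curry ℝ ℝ F F)

@[simp] theorem toMatrix_apply (x : EuclideanSpace ℝ (F × F)) (i j : F) :
    toMatrix x i j = x (i, j) := rfl

@[simp] theorem toMatrix_symm_apply (A : Matrix F F ℝ) (p : F × F) :
    toMatrix.symm A p = A p.1 p.2 := rfl

variable [Fintype F]

theorem continuous_toMatrix : Continuous (toMatrix : EuclideanSpace ℝ (F × F) → Matrix F F ℝ) :=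
  LinearMap.continuous_of_finiteDimensional toMatrix.toLinearMap

theorem inner_eq_trace (x y : EuclideanSpace ℝ (F × F)) :
    ⟪x, y⟫ = ((toMatrix x)ᵀ * toMatrix y).trace := by
  simp only [PiLp.inner_apply, Matrix.trace, Matrix.diag, Matrix.mul_apply, Fintype.sum_prod_type]
  rw [Finset.sum_comm]
  simp [mul_comm]

noncomputable def transposeₗᵢ : EuclideanSpace ℝ (F × F) ≃ₗᵢ[ℝ] EuclideanSpace ℝ (F × F) :=
  LinearIsometryEquiv.piLpCongrLeft 2 ℝ ℝ (Equiv.prodComm F F)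

@[simp] theorem transposeₗᵢ_apply (x : EuclideanSpace ℝ (F × F)) (i j : F) :
    transposeₗᵢ x (i, j) = x (j, i) := by
  simp [transposeₗᵢ]

@[simp] theorem toMatrix_transposeₗᵢ (x : EuclideanSpace ℝ (F × F)) :
    toMatrix (transposeₗᵢ x) = (toMatrix x)ᵀ := by
  ext i j; simp

@[simp] theorem transposeₗᵢ_transposeₗᵢ (x : EuclideanSpace ℝ (F × F)) :
    transposeₗᵢ (transposeₗᵢ x) = x := by
  ext ⟨i, j⟩; simp

theorem inner_transposeₗᵢ_left (x y : EuclideanSpace ℝ (F × F)) :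
    ⟪transposeₗᵢ x, y⟫ = ⟪x, transposeₗᵢ y⟫ := by
  rw [← transposeₗᵢ.inner_map_map, transposeₗᵢ_transposeₗᵢ]

theorem transposeₗᵢ_mask [DecidableEq F] {E : Finset (F × F)} (hE : ∀ p ∈ E, p.swap ∈ E)
    (x : EuclideanSpace ℝ (F × F)) : transposeₗᵢ (mask E x) = mask E (transposeₗᵢ x) := by
  have hE' : ∀ i j, (j, i) ∈ E ↔ (i, j) ∈ E := fun i j => ⟨hE _, hE _⟩
  ext ⟨i, j⟩; simp [mask_apply, hE']

theorem inner_add_transposeₗᵢ (u w : EuclideanSpace ℝ (F × F)) :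
    ⟪u, w + transposeₗᵢ w⟫ = ⟪u + transposeₗᵢ u, w⟫ := by
  rw [inner_add_right, inner_add_left, inner_transposeₗᵢ_left]

theorem dotProduct_toMatrix_mulVec_eq_inner (v : F → ℝ) (w : EuclideanSpace ℝ (F × F)) :
    v ⬝ᵥ toMatrix w *ᵥ v = ⟪toMatrix.symm (vecMulVec v v), w⟫ := by
  simp only [dotProduct, mulVec, toMatrix_apply, Finset.mul_sum, inner_eq_trace, trace,
    LinearEquiv.apply_symm_apply, transpose_vecMulVec, diag_apply, Matrix.mul_apply,
    vecMulVec_apply]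
  rw [Finset.sum_comm]
  exact Finset.sum_congr rfl fun i _ => Finset.sum_congr rfl fun j _ => by ring

theorem inner_mask_add_transposeₗᵢ [DecidableEq F] (E : Finset (F × F))
    {z : EuclideanSpace ℝ (F × F)} (hz : transposeₗᵢ z = z) (y : EuclideanSpace ℝ (F × F)) :
    ⟪z, mask E y + transposeₗᵢ (mask E y)⟫ = 2 * ⟪mask E z, y⟫ := by
  rw [inner_add_right, ← inner_transposeₗᵢ_left, hz, ← inner_mask_left]
  ring

theorem isSymm_toMatrix_iff {x : EuclideanSpace ℝ (F × F)} :
    (toMatrix x).IsSymm ↔ transposeₗᵢ x = x := by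
  rw [Matrix.IsSymm, ← toMatrix_transposeₗᵢ, toMatrix.injective.eq_iff]

end EuclideanSpace

namespace Matrix

variable {n : Type*} [Fintype n]

theorem isClosed_setOf_posSemidef : IsClosed {A : Matrix n n ℝ | A.PosSemidef} := by
  simp only [posSemidef_iff_dotProduct_mulVec, ofPred_and, ofPred_forall]
  refine (isClosed_eq (by fun_prop) continuous_id).inter
    (isClosed_iInter fun v => isClosed_le continuous_const (by fun_prop))

theorem PosSemidef.two_mul_abs_apply_le {A : Matrix n n ℝ} (hA : A.PosSemidef) (i j : n) :
    2 * |A i j| ≤ A i i + A j j := by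
  classical
  have hsymm : A j i = A i j := by simpa using congrFun₂ hA.1 i j
  have hadd := hA.dotProduct_mulVec_nonneg (Pi.single i 1 + Pi.single j 1)
  have hsub := hA.dotProduct_mulVec_nonneg (Pi.single i 1 - Pi.single j 1)
  simp only [star_trivial, mulVec_add, mulVec_sub, mulVec_single, MulOpposite.op_one, one_smul,
    dotProduct_add, dotProduct_sub, add_dotProduct, sub_dotProduct, single_dotProduct, col_apply,
    one_mul, hsymm] at hadd hsub
  cases abs_cases (A i j) <;> linarith

theorem trace_transpose_mul_eq_sum_hadamard (A B : Matrix n n ℝ) :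
    (Aᵀ * B).trace = ∑ i, ∑ j, (A ⊙ B) i j := by
  rw [sum_hadamard_eq, trace_mul_comm, ← trace_transpose, transpose_mul, transpose_transpose]

theorem PosSemidef.trace_transpose_mul_nonneg {A B : Matrix n n ℝ} (hA : A.PosSemidef)
    (hB : B.PosSemidef) : 0 ≤ (Aᵀ * B).trace := by
  have := (hA.hadamard hB).dotProduct_mulVec_nonneg (fun _ => 1)
  rw [trace_transpose_mul_eq_sum_hadamard]
  simpa [dotProduct, mulVec] using this

theorem trace_transpose_add_mul_nonneg {P N Y : Matrix n n ℝ} (hP : P.PosSemidef)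
    (hN : ∀ i j, 0 ≤ N i j) (hY : Y.PosSemidef) (hY' : ∀ i j, 0 ≤ Y i j) :
    0 ≤ ((P + N)ᵀ * Y).trace := by
  rw [transpose_add, add_mul, trace_add]
  refine add_nonneg (hP.trace_transpose_mul_nonneg hY) ?_
  rw [trace_transpose_mul_eq_sum_hadamard]
  exact Finset.sum_nonneg fun i _ => Finset.sum_nonneg fun j _ => mul_nonneg (hN i j) (hY' i j)

theorem trace_transpose_mul_congr {E : Set (n × n)} {A Y Y' : Matrix n n ℝ}
    (hA : ∀ p ∉ E, A p.1 p.2 = 0) (hY : ∀ p ∈ E, Y' p.1 p.2 = Y p.1 p.2) :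
    (Aᵀ * Y').trace = (Aᵀ * Y).trace := by
  simp only [trace_transpose_mul_eq_sum_hadamard, hadamard_apply]
  refine Finset.sum_congr rfl fun i _ => Finset.sum_congr rfl fun j _ => ?_
  by_cases h : (i, j) ∈ E
  · rw [hY _ h]
  · rw [hA _ h, zero_mul, zero_mul]

end Matrix

namespace MatrixCone

open EuclideanSpace

variable (F : Type*) [Fintype F]

def psd : PointedCone ℝ (EuclideanSpace ℝ (F × F)) where
  carrier := {x | (toMatrix x).PosSemidef}
  add_mem' {x y} hx hy := by simpa using hx.add hy
  zero_mem' := by simpa using PosSemidef.zero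
  smul_mem' c x hx := by
    change (toMatrix ((c : ℝ) • x)).PosSemidef
    rw [map_smul]
    exact hx.smul c.2

def symNonneg : PointedCone ℝ (EuclideanSpace ℝ (F × F)) where
  carrier := {x | (toMatrix x).IsSymm ∧ ∀ i j, 0 ≤ toMatrix x i j}
  add_mem' {x y} hx hy := ⟨by simpa using hx.1.add hy.1, fun i j => by
    simpa using add_nonneg (hx.2 i j) (hy.2 i j)⟩
  zero_mem' := ⟨by simp, fun i j => by simp⟩
  smul_mem' c x hx := by
    change (toMatrix ((c : ℝ) • x)).IsSymm ∧ ∀ i j, 0 ≤ toMatrix ((c : ℝ) • x) i j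
    simpa using ⟨hx.1.smul (c : ℝ), fun i j => mul_nonneg c.2 (hx.2 i j)⟩

variable {F}

omit [Fintype F] in
theorem mem_psd {x : EuclideanSpace ℝ (F × F)} : x ∈ psd F ↔ (toMatrix x).PosSemidef := Iff.rfl

theorem isClosed_psd : IsClosed (psd F : Set (EuclideanSpace ℝ (F × F))) :=
  isClosed_setOf_posSemidef.preimage continuous_toMatrix

theorem isClosed_symNonneg : IsClosed (symNonneg F : Set (EuclideanSpace ℝ (F × F))) := by
  change IsClosed {x | _ ∧ _}
  simp only [isSymm_toMatrix_iff, toMatrix_apply, ofPred_and, ofPred_forall]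
  exact (isClosed_eq (by fun_prop) continuous_id).inter
    (isClosed_iInter fun i => isClosed_iInter fun j => isClosed_le continuous_const (by fun_prop))

theorem abs_apply_le_of_mem_psd {x : EuclideanSpace ℝ (F × F)} (hx : x ∈ psd F) {R : ℝ}
    (hR : ∀ i, x (i, i) ≤ R) (p : F × F) : |x p| ≤ R := by
  have := hx.two_mul_abs_apply_le p.1 p.2
  simp only [toMatrix_apply] at this
  linarith [hR p.1, hR p.2]

theorem isClosed_psd_sup_symNonneg :
    IsClosed ((psd F ⊔ symNonneg F : PointedCone ℝ _) : Set (EuclideanSpace ℝ (F × F))) := by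
  have himage : ((psd F ⊔ symNonneg F : PointedCone ℝ _) : Set (EuclideanSpace ℝ (F × F))) =
      (fun q => q.1 + q.2) '' (psd F ×ˢ symNonneg F : Set (_ × _)) := by
    rw [Submodule.coe_sup, ← Set.image2_add, ← Set.image_prod]
  rw [himage]
  refine (isClosed_psd.prod isClosed_symNonneg).image_of_isBounded_inter_preimage (by fun_prop)
    fun B hB => ?_
  obtain ⟨R, hR⟩ := isBounded_iff_forall_norm_le.mp hB
  refine ((isBounded_setOf_forall_abs_apply_le R).prod
    (isBounded_setOf_forall_abs_apply_le (R + R))).subset ?_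
  rintro ⟨a, b⟩ ⟨⟨ha, hb⟩, hab⟩
  have hsum : ∀ p, |a p + b p| ≤ R := fun p => (PiLp.norm_apply_le (a + b) p).trans (hR _ hab)
  have hdiag : ∀ i, a (i, i) ≤ R := fun i => by
    have hbii : 0 ≤ b (i, i) := hb.2 i i
    linarith [le_abs_self (a (i, i) + b (i, i)), hsum (i, i)]
  have ha' := abs_apply_le_of_mem_psd ha hdiag
  refine ⟨ha', fun p => ?_⟩
  calc |b p| = |(a p + b p) - a p| := by ring_nf
    _ ≤ |a p + b p| + |a p| := abs_sub _ _
    _ ≤ R + R := add_le_add (hsum p) (ha' p)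

theorem isClosed_mask_image_psd_inf_symNonneg [DecidableEq F] {E : Finset (F × F)}
    (hE : ∀ i, (i, i) ∈ E) :
    IsClosed (mask E '' ((psd F ⊓ symNonneg F : PointedCone ℝ _) :
      Set (EuclideanSpace ℝ (F × F)))) := by
  refine IsClosed.image_of_isBounded_inter_preimage
    (LinearMap.continuous_of_finiteDimensional _) (isClosed_psd.inter isClosed_symNonneg)
    fun B hB => ?_
  obtain ⟨R, hR⟩ := isBounded_iff_forall_norm_le.mp hB
  refine (isBounded_setOf_forall_abs_apply_le R).subset ?_
  rintro x ⟨⟨hx, -⟩, hxB⟩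
  refine abs_apply_le_of_mem_psd hx fun i => ?_
  calc x (i, i) = mask E x (i, i) := by simp [mask_apply, hE]
    _ ≤ ‖mask E x‖ := (Real.le_norm_self _).trans (PiLp.norm_apply_le _ _)
    _ ≤ R := hR _ hxB

theorem add_transposeₗᵢ_mem_psd {u : EuclideanSpace ℝ (F × F)} (hu : u ∈ psd F) :
    u + transposeₗᵢ u ∈ psd F := by
  rw [mem_psd, map_add, toMatrix_transposeₗᵢ]
  exact hu.add hu.transpose

theorem add_transposeₗᵢ_mem_symNonneg {u : EuclideanSpace ℝ (F × F)} (hu : ∀ p, 0 ≤ u p) :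
    u + transposeₗᵢ u ∈ symNonneg F :=
  ⟨by rw [isSymm_toMatrix_iff, map_add, transposeₗᵢ_transposeₗᵢ, add_comm],
    fun i j => by simpa using add_nonneg (hu (i, j)) (hu (j, i))⟩

theorem add_transposeₗᵢ_mem_of_mem_innerDual {w : EuclideanSpace ℝ (F × F)}
    (hw : w ∈ ProperCone.innerDual ((psd F ⊔ symNonneg F : PointedCone ℝ _) : Set _)) :
    w + transposeₗᵢ w ∈ psd F ⊓ symNonneg F := by
  have hsymm : (toMatrix (w + transposeₗᵢ w)).IsSymm := by
    rw [isSymm_toMatrix_iff, map_add, transposeₗᵢ_transposeₗᵢ, add_comm]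
  refine ⟨PosSemidef.of_dotProduct_mulVec_nonneg (isHermitian_iff_isSymm.mpr hsymm) fun v => ?_,
    hsymm, fun i j => ?_⟩
  · set u := toMatrix.symm (vecMulVec v v)
    have hu : u + transposeₗᵢ u ∈ psd F := add_transposeₗᵢ_mem_psd <| by
      simpa [u, mem_psd] using posSemidef_vecMulVec_self_star v
    have := ProperCone.mem_innerDual.mp hw (Submodule.mem_sup_left hu)
    rw [← inner_add_transposeₗᵢ, ← dotProduct_toMatrix_mulVec_eq_inner] at this
    simpa using this
  · classical
    set u := EuclideanSpace.single (i, j) (1 : ℝ)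
    have hu : u + transposeₗᵢ u ∈ symNonneg F := add_transposeₗᵢ_mem_symNonneg fun p => by
      by_cases h : p = (i, j) <;> simp [u, h]
    have := ProperCone.mem_innerDual.mp hw (Submodule.mem_sup_right hu)
    rw [← inner_add_transposeₗᵢ, EuclideanSpace.inner_single_left] at this
    simpa using this

theorem mem_psd_sup_symNonneg_of_mem_innerDual {c : EuclideanSpace ℝ (F × F)}
    (hc : transposeₗᵢ c = c)
    (hdual : c ∈ ProperCone.innerDual ((psd F ⊓ symNonneg F : PointedCone ℝ _) : Set _)) :
    c ∈ psd F ⊔ symNonneg F := by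
  let M : ProperCone ℝ (EuclideanSpace ℝ (F × F)) :=
    ⟨psd F ⊔ symNonneg F, isClosed_psd_sup_symNonneg⟩
  change c ∈ M
  rw [← ProperCone.innerDual_innerDual M, ProperCone.mem_innerDual]
  intro w hw
  have := ProperCone.mem_innerDual.mp hdual (add_transposeₗᵢ_mem_of_mem_innerDual hw)
  rw [← inner_add_transposeₗᵢ, hc, inner_add_right] at this
  linarith

theorem exists_mem_psd_inf_symNonneg_mask_eq [DecidableEq F] {E : Finset (F × F)}
    (hdiag : ∀ i, (i, i) ∈ E) (hsymm : ∀ p ∈ E, p.swap ∈ E) {b : EuclideanSpace ℝ (F × F)}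
    (hb : transposeₗᵢ b = b) (hcut : ∀ c ∈ psd F ⊔ symNonneg F, mask E c = c → 0 ≤ ⟪c, b⟫) :
    ∃ z ∈ psd F ⊓ symNonneg F, mask E z = mask E b := by
  let K : ProperCone ℝ (EuclideanSpace ℝ (F × F)) :=
    ⟨(psd F ⊓ symNonneg F).map (mask E), by
      simpa [PointedCone.coe_map] using isClosed_mask_image_psd_inf_symNonneg hdiag⟩
  by_contra hbK
  obtain ⟨y, hyK, hyb⟩ := K.hyperplane_separation' (x₀ := mask E b) fun h =>
    hbK (PointedCone.mem_map.mp h)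
  set c := mask E y + transposeₗᵢ (mask E y)
  have hcT : transposeₗᵢ c = c := by
    rw [map_add, transposeₗᵢ_transposeₗᵢ, add_comm]
  have hcE : mask E c = c := by
    rw [map_add, ← transposeₗᵢ_mask hsymm, mask_mask]
  have hcdual : c ∈ ProperCone.innerDual ((psd F ⊓ symNonneg F : PointedCone ℝ _) : Set _) := by
    refine ProperCone.mem_innerDual.mpr fun z hz => ?_
    rw [inner_mask_add_transposeₗᵢ E (isSymm_toMatrix_iff.mp hz.2.1)]
    exact mul_nonneg zero_le_two (hyK _ (PointedCone.mem_map.mpr ⟨z, hz, rfl⟩))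
  have := hcut c (mem_psd_sup_symNonneg_of_mem_innerDual hcT hcdual) hcE
  rw [real_inner_comm, inner_mask_add_transposeₗᵢ E hb] at this
  linarith

end MatrixCone

open EuclideanSpace MatrixCone in
theorem Matrix.exists_posSemidef_nonneg_eq_on {F : Type*} [Fintype F] {E : Finset (F × F)}
    (hdiag : ∀ i, (i, i) ∈ E) (hsymm : ∀ p ∈ E, p.swap ∈ E) {Y : Matrix F F ℝ}
    (hY : Y.IsSymm)
    (hcut : ∀ P N : Matrix F F ℝ, P.PosSemidef → N.IsSymm → (∀ i j, 0 ≤ N i j) →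
      (∀ p ∉ E, (P + N) p.1 p.2 = 0) → 0 ≤ ((P + N)ᵀ * Y).trace) :
    ∃ Y' : Matrix F F ℝ, Y'.PosSemidef ∧ (∀ i j, 0 ≤ Y' i j) ∧
      ∀ p ∈ E, Y' p.1 p.2 = Y p.1 p.2 := by
  classical
  obtain ⟨z, ⟨hzP, hzN⟩, hzE⟩ := exists_mem_psd_inf_symNonneg_mask_eq hdiag hsymm
    (b := toMatrix.symm Y) (by rwa [← isSymm_toMatrix_iff, LinearEquiv.apply_symm_apply]) <| by
      rintro c hc hcE
      obtain ⟨a, ha, d, hd, rfl⟩ := Submodule.mem_sup.mp hc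
      have hsupp : ∀ p ∉ E, (toMatrix a + toMatrix d) p.1 p.2 = 0 := fun p hp => by
        rw [← map_add, ← hcE]
        simp [mask_apply, hp]
      simpa [inner_eq_trace] using hcut _ _ ha hd.1 hd.2 hsupp
  refine ⟨toMatrix z, hzP, hzN.2, fun p hp => ?_⟩
  simpa [mask_apply, hp] using congr($hzE p)

theorem stmt_16_general (n m : ℕ) (E : Finset (Fin (n+1) × Fin (n+1)))
    (hdiag : ∀ i, (i, i) ∈ E) (hsymE : ∀ p ∈ E, (p.2, p.1) ∈ E)
    (Q0 : Matrix (Fin (n+1)) (Fin (n+1)) ℝ)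
    (Q : Fin m → Matrix (Fin (n+1)) (Fin (n+1)) ℝ)
    (hQ0supp : ∀ p : Fin (n+1) × Fin (n+1), p ∉ E → Q0 p.1 p.2 = 0)
    (hQsupp : ∀ k, ∀ p : Fin (n+1) × Fin (n+1), p ∉ E → Q k p.1 p.2 = 0)
    (𝒴 : Set (Matrix (Fin (n+1)) (Fin (n+1)) ℝ))
    (h𝒴sym : ∀ Y ∈ 𝒴, Y.IsSymm)
    (h𝒴E : ∀ Y Y' : Matrix (Fin (n+1)) (Fin (n+1)) ℝ, Y ∈ 𝒴 → Y'.IsSymm →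
      (∀ p : Fin (n+1) × Fin (n+1), p ∈ E → Y' p.1 p.2 = Y p.1 p.2) → Y' ∈ 𝒴) :
    sInf {v : ℝ | ∃ Y ∈ 𝒴, (∀ k, ((Q k)ᵀ * Y).trace ≤ 0) ∧
        Y.PosSemidef ∧ (∀ i j, 0 ≤ Y i j) ∧ v = (Q0ᵀ * Y).trace} =
      sInf {v : ℝ | ∃ Y ∈ 𝒴, (∀ k, ((Q k)ᵀ * Y).trace ≤ 0) ∧
        (∀ C : Matrix (Fin (n+1)) (Fin (n+1)) ℝ,
          (∃ P N : Matrix (Fin (n+1)) (Fin (n+1)) ℝ,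
            P.PosSemidef ∧ N.IsSymm ∧ (∀ i j, 0 ≤ N i j) ∧ C = P + N) →
          (∀ p : Fin (n+1) × Fin (n+1), p ∉ E → C p.1 p.2 = 0) →
          0 ≤ (Cᵀ * Y).trace) ∧
        v = (Q0ᵀ * Y).trace} := by
  congr 1
  ext v
  constructor
  · rintro ⟨Y, hY𝒴, hQ, hYpsd, hYnonneg, rfl⟩
    refine ⟨Y, hY𝒴, hQ, ?_, rfl⟩
    rintro C ⟨P, N, hP, -, hN, rfl⟩ -
    exact trace_transpose_add_mul_nonneg hP hN hYpsd hYnonneg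
  · rintro ⟨Y, hY𝒴, hQ, hcut, rfl⟩
    obtain ⟨Y', hY'psd, hY'nonneg, hY'E⟩ := exists_posSemidef_nonneg_eq_on hdiag hsymE
      (h𝒴sym Y hY𝒴) fun P N hP hN hN' hsupp => hcut _ ⟨P, N, hP, hN, hN', rfl⟩ hsupp
    refine ⟨Y', h𝒴E Y Y' hY𝒴 (isHermitian_iff_isSymm.mp hY'psd.1) hY'E,
      fun k => ?_, hY'psd, hY'nonneg, (trace_transpose_mul_congr hQ0supp hY'E).symm⟩
    rw [trace_transpose_mul_congr (hQsupp k) hY'E]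
    exact hQ k

/-- The doubly nonnegative analogue of `z^SDP = z^{SDP-E}`: with data supported
on a symmetric index set `E` containing the diagonal, imposing `Y ∈ D = S⁺ ∩ N`
gives the same optimal value as imposing only the cuts `⟨C, Y⟩ ≥ 0` for
`C ∈ D* ∩ H_E`, where `D* = S⁺ + N`. -/
theorem stmt_16 (n m : ℕ) (E : Finset (Fin (n+1) × Fin (n+1)))
    (hdiag : ∀ i, (i, i) ∈ E) (hsymE : ∀ p ∈ E, (p.2, p.1) ∈ E)
    (Q0 : Matrix (Fin (n+1)) (Fin (n+1)) ℝ)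
    (Q : Fin m → Matrix (Fin (n+1)) (Fin (n+1)) ℝ)
    (hQ0sym : Q0.IsSymm) (hQsym : ∀ k, (Q k).IsSymm)
    (hQ0supp : ∀ p : Fin (n+1) × Fin (n+1), p ∉ E → Q0 p.1 p.2 = 0)
    (hQsupp : ∀ k, ∀ p : Fin (n+1) × Fin (n+1), p ∉ E → Q k p.1 p.2 = 0)
    (𝒴 : Set (Matrix (Fin (n+1)) (Fin (n+1)) ℝ))
    (h𝒴sym : ∀ Y ∈ 𝒴, Y.IsSymm)
    (h𝒴E : ∀ Y Y' : Matrix (Fin (n+1)) (Fin (n+1)) ℝ, Y ∈ 𝒴 → Y'.IsSymm →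
      (∀ p : Fin (n+1) × Fin (n+1), p ∈ E → Y' p.1 p.2 = Y p.1 p.2) → Y' ∈ 𝒴) :
    sInf {v : ℝ | ∃ Y ∈ 𝒴, (∀ k, ((Q k)ᵀ * Y).trace ≤ 0) ∧
        Y.PosSemidef ∧ (∀ i j, 0 ≤ Y i j) ∧ v = (Q0ᵀ * Y).trace} =
      sInf {v : ℝ | ∃ Y ∈ 𝒴, (∀ k, ((Q k)ᵀ * Y).trace ≤ 0) ∧
        (∀ C : Matrix (Fin (n+1)) (Fin (n+1)) ℝ,
          (∃ P N : Matrix (Fin (n+1)) (Fin (n+1)) ℝ,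
            P.PosSemidef ∧ N.IsSymm ∧ (∀ i j, 0 ≤ N i j) ∧ C = P + N) →
          (∀ p : Fin (n+1) × Fin (n+1), p ∉ E → C p.1 p.2 = 0) →
          0 ≤ (Cᵀ * Y).trace) ∧
        v = (Q0ᵀ * Y).trace} :=
  stmt_16_general n m E hdiag hsymE Q0 Q hQ0supp hQsupp 𝒴 h𝒴sym h𝒴E
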